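/- arXiv:1605.08280 — 4 statements merged into one kernel-verified Lean document; each statement's English description precedes it below -/
import Mathlib

section
/- If a is a positive integer with a ≡ 1 (mod p) and a − 1 is not a power of p, writing a − 1 = Σ_{r=1}^t c_r p^r with c_t ≠ 0, then binom(a, p^t) is not divisible by p. -/
/-!
By Lucas's theorem `(n choose p ^ t) ≡ ⌊n / p ^ t⌋ [MOD p]`. Since `p ∤ a`, the numbers `a - 1` and
`a` have the same number of base-`p` digits, so for `t = log p (a - 1)` the quotient `⌊a / p ^ t⌋`
is the leading base-`p` digit of `a`, which lies in `[1, p)`.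
-/

namespace Nat

variable {b n : ℕ}

theorem div_pow_log_pos (hb : 1 < b) (hn : n ≠ 0) : 0 < n / b ^ log b n :=
  Nat.div_pos (pow_log_le_self b hn) (Nat.pow_pos (zero_lt_one.trans hb))

theorem div_pow_log_lt (hb : 1 < b) (n : ℕ) : n / b ^ log b n < b := by
  rw [Nat.div_lt_iff_lt_mul (Nat.pow_pos (zero_lt_one.trans hb)), ← Nat.pow_succ']
  exact lt_pow_succ_log_self hb n

-- `log b` only increases at positive powers of `b`, and `n` is not one of them.
theorem log_sub_one_eq_log_of_not_dvd (hb : 1 < b) (hn : ¬ b ∣ n) : log b (n - 1) = log b n := by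
  have hn₀ : n ≠ 0 := by rintro rfl; exact hn (dvd_zero b)
  have hne : n ≠ b ^ (log b (n - 1) + 1) := fun h ↦ hn (h ▸ dvd_pow_self b (succ_ne_zero _))
  have hlt : n - 1 < b ^ (log b (n - 1) + 1) := lt_pow_succ_log_self hb (n - 1)
  have hle := pow_log_le_add_one b (n - 1)
  exact (log_eq_of_pow_le_of_lt_pow (by omega) (by omega)).symm

end Nat

namespace Choose

variable {p : ℕ} [Fact p.Prime]

theorem choose_pow_modEq_div (n t : ℕ) : n.choose (p ^ t) ≡ n / p ^ t [MOD p] := by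
  induction t generalizing n with
  | zero => simp [Nat.ModEq]
  | succ t ih =>
    have hp := (Fact.out : p.Prime).pos
    calc n.choose (p ^ (t + 1))
        ≡ (n % p).choose (p ^ (t + 1) % p) * (n / p).choose (p ^ (t + 1) / p) [MOD p] :=
          choose_modEq_choose_mod_mul_choose_div_nat
      _ = (n / p).choose (p ^ t) := by
          rw [Nat.pow_mod, Nat.mod_self, zero_pow (Nat.succ_ne_zero t), Nat.zero_mod,
            Nat.choose_zero_right, one_mul, Nat.pow_succ, Nat.mul_div_cancel _ hp]
      _ ≡ n / p / p ^ t [MOD p] := ih (n / p)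
      _ = n / p ^ (t + 1) := by rw [Nat.div_div_eq_div_mul, ← Nat.pow_succ']

end Choose

theorem choose_p_pow_log_pred_not_dvd_general (p a : ℕ) (hp : p.Prime)
    (hmod : a % p = 1) :
    ¬ p ∣ a.choose (p ^ Nat.log p (a - 1)) := by
  have : Fact p.Prime := ⟨hp⟩
  have hpa : ¬ p ∣ a := by rw [Nat.dvd_iff_mod_eq_zero, hmod]; exact one_ne_zero
  have ha : a ≠ 0 := by rintro rfl; exact hpa (dvd_zero p)
  rw [Nat.log_sub_one_eq_log_of_not_dvd hp.one_lt hpa,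
    (Choose.choose_pow_modEq_div a _).dvd_iff dvd_rfl]
  exact Nat.not_dvd_of_pos_of_lt (Nat.div_pow_log_pos hp.one_lt ha) (Nat.div_pow_log_lt hp.one_lt a)

theorem choose_p_pow_log_pred_not_dvd (p a : ℕ) (hp : p.Prime) (ha : 0 < a)
    (hmod : a % p = 1) (hnotpow : ∀ q : ℕ, a - 1 ≠ p ^ q) :
    ¬ p ∣ a.choose (p ^ Nat.log p (a - 1)) :=
  choose_p_pow_log_pred_not_dvd_general p a hp hmod
end

section
/- The kernel of the linear map D_H : O(m,n;t) → W(m,n;t) is the one-dimensional subspace F·1 spanned by the constants. -/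
/-!
Evaluating `D_H f` at the coordinate function `x_{k'}` kills every summand but the `k`-th,
because `∂_l x_{k'} = δ_{lk}` once `k ↦ k'` is injective; what is left is `τ(k) ∂_k` applied to
`f` twisted by the parity sign. So `D_H f = 0` makes every partial derivative of the twisted `f`
vanish. Coefficientwise, `∂_i` sends `x^(α+ε_i) x^u` to `x^(α) x^u` and `∂_j` sends
`x^(α) x^(u ∪ {j})` to `± x^(α) x^u`, so every monomial other than `1` occurring in `f` survives
some derivative; hence `f` is a constant.
-/

open Finsupp Finset

namespace HamSup

variable (F : Type) [Field F]

/-- Monomial index: a multi-exponent for the divided power part and a set of odd indices. -/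
abbrev Mono (m n : ℕ) := (Fin m → ℕ) × Finset (Fin n)

/-- The superalgebra `O(m,n)` as the free module on monomials `x^(α) x^u`. -/
abbrev O (m n : ℕ) := Mono m n →₀ F

variable {m n : ℕ}

/-- The basis monomial `x^(α) x^u`. -/
noncomputable def X (μ : Mono m n) : O F m n := Finsupp.single μ 1

/-- Linear extension of a map defined on basis monomials. -/
noncomputable def extend {N : Type} [AddCommGroup N] [Module F N]
    (v : Mono m n → N) : O F m n →ₗ[F] N :=
  Finsupp.lsum F fun μ => LinearMap.toSpanSingleton F N (v μ)

/-- Number of inversions when concatenating `x^u` and `x^v`. -/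
def invCount (u v : Finset (Fin n)) : ℕ :=
  ((u ×ˢ v).filter fun q => q.2 < q.1).card

/-- Product of two basis monomials: divided-power binomial coefficients on the even part and
a sign (with nilpotency) on the exterior part. -/
noncomputable def mulMono (μ ν : Mono m n) : O F m n :=
  if Disjoint μ.2 ν.2 then
    (((-1 : F) ^ invCount μ.2 ν.2) * ∏ i, ((μ.1 i + ν.1 i).choose (μ.1 i) : F)) •
      X F (μ.1 + ν.1, μ.2 ∪ ν.2)
  else 0

/-- The multiplication of `O(m,n)` as a bilinear map. -/
noncomputable def mulO : O F m n →ₗ[F] O F m n →ₗ[F] O F m n :=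
  extend F fun μ => extend F (mulMono F μ)

/-- Even partial derivative `∂_i`, `i ∈ I₀`. -/
noncomputable def pdE (i : Fin m) : O F m n →ₗ[F] O F m n :=
  extend F fun μ =>
    if μ.1 i = 0 then 0 else X F (Function.update μ.1 i (μ.1 i - 1), μ.2)

/-- Odd partial derivative `∂_j`, `j ∈ I₁`. -/
noncomputable def pdO (j : Fin n) : O F m n →ₗ[F] O F m n :=
  extend F fun μ =>
    if j ∈ μ.2 then ((-1 : F) ^ (μ.2.filter fun k => k < j).card) • X F (μ.1, μ.2.erase j)
    else 0

/-- Partial derivative indexed by `I = I₀ ⊔ I₁`. -/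
noncomputable def pd (i : Fin m ⊕ Fin n) : O F m n →ₗ[F] O F m n :=
  Sum.elim (pdE F) (pdO F) i

/-- Parity `μ(i)` of an index. -/
def idxPar : Fin m ⊕ Fin n → ℕ := Sum.elim (fun _ => 0) (fun _ => 1)

/-- The sign `τ(i)`. -/
def tau (r : ℕ) : Fin m ⊕ Fin n → ℤ :=
  Sum.elim (fun i => if (i : ℕ) < r then 1 else -1) (fun _ => 1)

/-- The basis vector field `x^(α) x^u ∂_i` of the Witt superalgebra, as an endomorphism. -/
noncomputable def fD (μ : Mono m n) (i : Fin m ⊕ Fin n) : Module.End F (O F m n) :=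
  (mulO F (X F μ)).comp (pd F i)

/-- `D_H(x^(α)x^u) = Σ_i τ(i)(−1)^{μ(i)p(f)} ∂_i(f) ∂_{i'}` on a basis monomial. -/
noncomputable def DHmono (r : ℕ) (pr : Fin m ⊕ Fin n → Fin m ⊕ Fin n) (μ : Mono m n) :
    Module.End F (O F m n) :=
  ∑ i : Fin m ⊕ Fin n,
    (((tau r i : ℤ) : F) * (-1 : F) ^ (idxPar i * μ.2.card)) •
      ((mulO F (pd F i (X F μ))).comp (pd F (pr i)))

/-- The Hamiltonian map `D_H` as a linear map. -/
noncomputable def DH (r : ℕ) (pr : Fin m ⊕ Fin n → Fin m ⊕ Fin n) :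
    O F m n →ₗ[F] Module.End F (O F m n) :=
  extend F (DHmono F r pr)

/-- Truncation condition `α ∈ A(m;t)`, i.e. `α_i ≤ π_i = p^{t_i} − 1`. -/
def inA (p : ℕ) (t : Fin m → ℕ) (α : Fin m → ℕ) : Prop := ∀ i, α i < p ^ t i

/-- The tuple `π`. -/
def piF (p : ℕ) (t : Fin m → ℕ) : Fin m → ℕ := fun i => p ^ t i - 1

/-- The truncated algebra `O(m,n;t)` as a subspace. -/
noncomputable def Ot (p : ℕ) (t : Fin m → ℕ) : Submodule F (O F m n) :=
  Submodule.span F {x | ∃ μ : Mono m n, inA p t μ.1 ∧ x = X F μ}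

/-- The even part `H₀̄` of the Hamiltonian superalgebra. -/
noncomputable def H0 (p r : ℕ) (t : Fin m → ℕ) (pr : Fin m ⊕ Fin n → Fin m ⊕ Fin n) :
    Submodule F (Module.End F (O F m n)) :=
  Submodule.span F {x | ∃ μ : Mono m n, inA p t μ.1 ∧ Even μ.2.card ∧
    ¬(μ.1 = piF p t ∧ μ.2 = Finset.univ) ∧ x = DHmono F r pr μ}

/-- The codimension-one ideal `J` of `H₀̄`. -/
noncomputable def Jid (p r : ℕ) (t : Fin m → ℕ) (pr : Fin m ⊕ Fin n → Fin m ⊕ Fin n) :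
    Submodule F (Module.End F (O F m n)) :=
  Submodule.span F {x | ∃ μ : Mono m n, inA p t μ.1 ∧ Even μ.2.card ∧
    ¬(μ.1 = piF p t ∧ μ.2 = Finset.univ) ∧ ¬(μ.1 = piF p t ∧ μ.2 = ∅) ∧
    x = DHmono F r pr μ}

/-- The odd part `W₁̄` of the Witt superalgebra `W(m,n;t)`. -/
noncomputable def W1 (p : ℕ) (t : Fin m → ℕ) : Submodule F (Module.End F (O F m n)) :=
  Submodule.span F {x | ∃ (μ : Mono m n) (i : Fin m ⊕ Fin n), inA p t μ.1 ∧
    Odd (μ.2.card + idxPar i) ∧ x = fD F μ i}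

/-- The `ℤ`-degree-`k` component of `W(m,n;t)`. -/
noncomputable def Wcomp (p : ℕ) (t : Fin m → ℕ) (k : ℤ) :
    Submodule F (Module.End F (O F m n)) :=
  Submodule.span F {x | ∃ (μ : Mono m n) (i : Fin m ⊕ Fin n), inA p t μ.1 ∧
    (((∑ l, μ.1 l : ℕ) : ℤ) + (μ.2.card : ℤ)) - 1 = k ∧ x = fD F μ i}

/-- The iterated adjoint action `(ad D)^k (E)`. -/
noncomputable def adIter (D : Module.End F (O F m n)) (k : ℕ)
    (E : Module.End F (O F m n)) : Module.End F (O F m n) :=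
  (fun E => D * E - E * D)^[k] E

end HamSup

namespace HamSup

variable {F : Type} [Field F] {m n : ℕ}

theorem extend_X {N : Type} [AddCommGroup N] [Module F N] (v : Mono m n → N) (μ : Mono m n) :
    extend F v (X F μ) = v μ := by
  simp [extend, X]

theorem linearMap_ext_X {N : Type} [AddCommGroup N] [Module F N] {φ ψ : O F m n →ₗ[F] N}
    (h : ∀ μ, φ (X F μ) = ψ (X F μ)) : φ = ψ :=
  Finsupp.lhom_ext' fun μ => LinearMap.ext_ring (h μ)

theorem mulO_X_zero (g : O F m n) :
    mulO F g (X F ((0 : Fin m → ℕ), (∅ : Finset (Fin n)))) = g := by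
  refine LinearMap.congr_fun (linearMap_ext_X (φ := (mulO F).flip _) (ψ := LinearMap.id)
    fun μ => ?_) g
  simp [mulO, extend_X, mulMono, invCount]

theorem pd_X_zero (k : Fin m ⊕ Fin n) :
    pd F k (X F ((0 : Fin m → ℕ), (∅ : Finset (Fin n)))) = 0 := by
  cases k <;> simp [pd, pdE, pdO, extend_X]

theorem DH_X_zero (r : ℕ) (pr : Fin m ⊕ Fin n → Fin m ⊕ Fin n) :
    DH F r pr (X F ((0 : Fin m → ℕ), (∅ : Finset (Fin n)))) = 0 := by
  simp [DH, DHmono, extend_X, pd_X_zero]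

noncomputable def coordX : Fin m ⊕ Fin n → O F m n :=
  Sum.elim (fun i => X F (Pi.single i 1, ∅)) (fun j => X F (0, {j}))

theorem pd_coordX (k l : Fin m ⊕ Fin n) :
    pd F k (coordX l) = if k = l then X F ((0 : Fin m → ℕ), (∅ : Finset (Fin n))) else 0 := by
  rcases k with i | j <;> rcases l with i' | j'
  · by_cases h : i = i'
    · subst h
      simp [pd, pdE, coordX, extend_X, Pi.single, Function.update_idem]
    · simp [pd, pdE, coordX, extend_X, h]
  · simp [pd, pdE, coordX, extend_X]
  · simp [pd, pdO, coordX, extend_X]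
  · by_cases h : j = j'
    · subst h
      simp [pd, pdO, coordX, extend_X, Finset.filter_singleton]
    · simp [pd, pdO, coordX, extend_X, h]

/-- The sign `(-1)^{μ(k)p(f)}` of `D_H`, as an operator on `f` (with `e = μ(k)`). -/
noncomputable def parityTwist (e : ℕ) : O F m n →ₗ[F] O F m n :=
  extend F fun μ => ((-1 : F) ^ (e * μ.2.card)) • X F μ

theorem parityTwist_apply (e : ℕ) (f : O F m n) (μ : Mono m n) :
    parityTwist e f μ = (-1 : F) ^ (e * μ.2.card) * f μ := by
  refine LinearMap.congr_fun (linearMap_ext_X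
    (φ := Finsupp.lapply μ ∘ₗ parityTwist e)
    (ψ := (-1 : F) ^ (e * μ.2.card) • Finsupp.lapply μ) fun ν => ?_) f
  simp only [LinearMap.comp_apply, LinearMap.smul_apply, parityTwist, extend_X]
  by_cases h : ν = μ
  · subst h
    simp [X]
  · simp [X, h]

theorem DHmono_apply_coordX (r : ℕ) {pr : Fin m ⊕ Fin n → Fin m ⊕ Fin n}
    (hpr : Function.Injective pr) (μ : Mono m n) (k : Fin m ⊕ Fin n) :
    DHmono F r pr μ (coordX (pr k)) =
      (((tau r k : ℤ) : F) * (-1 : F) ^ (idxPar k * μ.2.card)) • pd F k (X F μ) := by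
  rw [DHmono, LinearMap.sum_apply, Finset.sum_eq_single k]
  · simp [pd_coordX, mulO_X_zero]
  · intro l _ hl
    simp [pd_coordX, hpr.ne hl]
  · simp

theorem DH_apply_coordX (r : ℕ) {pr : Fin m ⊕ Fin n → Fin m ⊕ Fin n}
    (hpr : Function.Injective pr) (f : O F m n) (k : Fin m ⊕ Fin n) :
    DH F r pr f (coordX (pr k)) = ((tau r k : ℤ) : F) • pd F k (parityTwist (idxPar k) f) := by
  refine LinearMap.congr_fun (linearMap_ext_X
    (φ := LinearMap.applyₗ (coordX (pr k)) ∘ₗ DH F r pr)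
    (ψ := ((tau r k : ℤ) : F) • pd F k ∘ₗ parityTwist (idxPar k)) fun μ => ?_) f
  simp [DH, parityTwist, extend_X, DHmono_apply_coordX r hpr, mul_smul]

theorem tau_cast_ne_zero (r : ℕ) (k : Fin m ⊕ Fin n) : ((tau r k : ℤ) : F) ≠ 0 := by
  rcases k with i | j
  · simp only [tau, Sum.elim_inl]
    split_ifs <;> simp
  · simp [tau]

theorem update_sub_one_eq_iff {ι : Type*} [DecidableEq ι] {β α : ι → ℕ} {i : ι} (h : β i ≠ 0) :
    Function.update β i (β i - 1) = α ↔ β = α + Pi.single i 1 := by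
  simp only [funext_iff, Function.update_apply, Pi.add_apply, Pi.single_apply]
  refine forall_congr' fun k => ?_
  split_ifs with hk
  · subst hk; omega
  · omega

theorem pdE_apply (i : Fin m) (f : O F m n) (α : Fin m → ℕ) (u : Finset (Fin n)) :
    pdE F i f (α, u) = f (α + Pi.single i 1, u) := by
  refine LinearMap.congr_fun (linearMap_ext_X
    (φ := Finsupp.lapply (α, u) ∘ₗ pdE F i)
    (ψ := Finsupp.lapply (α + Pi.single i 1, u)) fun μ => ?_) f
  obtain ⟨β, v⟩ := μ
  simp only [LinearMap.comp_apply, Finsupp.lapply_apply, pdE, extend_X]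
  split_ifs with h0
  · have hne : (β, v) ≠ (α + Pi.single i 1, u) := fun h => by
      simpa [h0] using congr_fun (congrArg Prod.fst h) i
    simp [X, hne.symm]
  · simp only [X, Finsupp.single_apply, Prod.mk.injEq, update_sub_one_eq_iff h0]

theorem pdO_apply (j : Fin n) (f : O F m n) (α : Fin m → ℕ) {u : Finset (Fin n)} (hj : j ∉ u) :
    pdO F j f (α, u) = (-1 : F) ^ (u.filter fun k => k < j).card * f (α, insert j u) := by
  refine LinearMap.congr_fun (linearMap_ext_X
    (φ := Finsupp.lapply (α, u) ∘ₗ pdO F j)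
    (ψ := (-1 : F) ^ (u.filter fun k => k < j).card • Finsupp.lapply (α, insert j u))
    fun μ => ?_) f
  obtain ⟨β, v⟩ := μ
  simp only [LinearMap.comp_apply, LinearMap.smul_apply, Finsupp.lapply_apply, pdO, extend_X]
  by_cases hv : v = insert j u
  · subst hv
    simp [X, Finsupp.single_apply, Finset.erase_insert hj, Finset.filter_insert]
  · split_ifs with hjv
    · have hne : v.erase j ≠ u := fun h => hv (by rw [← h, Finset.insert_erase hjv])
      simp [X, hv, hne]
    · simp [X, hv]

theorem apply_eq_zero_of_pdE_eq_zero {i : Fin m} {g : O F m n} (hg : pdE F i g = 0)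
    {μ : Mono m n} (hμ : μ.1 i ≠ 0) : g μ = 0 := by
  have key := pdE_apply i g (μ.1 - Pi.single i 1) μ.2
  have hle : Pi.single i 1 ≤ μ.1 := fun k => by
    rcases eq_or_ne k i with rfl | hk <;> simp [*, Nat.one_le_iff_ne_zero]
  rwa [hg, tsub_add_cancel_of_le hle, Finsupp.zero_apply, eq_comm] at key

theorem apply_eq_zero_of_pdO_eq_zero {j : Fin n} {g : O F m n} (hg : pdO F j g = 0)
    {μ : Mono m n} (hμ : j ∈ μ.2) : g μ = 0 := by
  have key := pdO_apply j g μ.1 (Finset.notMem_erase j μ.2)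
  rw [hg, Finset.insert_erase hμ] at key
  simpa using key.symm

theorem parityTwist_apply_eq_zero_iff (e : ℕ) (f : O F m n) (μ : Mono m n) :
    parityTwist e f μ = 0 ↔ f μ = 0 := by
  simp [parityTwist_apply]

theorem eq_smul_X_zero_of_forall_pd_parityTwist_eq_zero {f : O F m n}
    (h : ∀ k, pd F k (parityTwist (idxPar k) f) = 0) :
    f = f (0, ∅) • X F ((0 : Fin m → ℕ), (∅ : Finset (Fin n))) := by
  rw [X, Finsupp.smul_single_one, Finsupp.eq_single_iff]
  refine ⟨fun μ hμ => ?_, rfl⟩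
  by_contra hne
  rw [Finset.mem_singleton] at hne
  apply Finsupp.mem_support_iff.1 hμ
  obtain ⟨i, hi⟩ | ⟨j, hj⟩ : (∃ i, μ.1 i ≠ 0) ∨ ∃ j, j ∈ μ.2 := by
    by_contra! h'
    exact hne (Prod.ext (funext h'.1) (Finset.eq_empty_of_forall_notMem h'.2))
  · exact (parityTwist_apply_eq_zero_iff _ f μ).1 (apply_eq_zero_of_pdE_eq_zero (h (.inl i)) hi)
  · exact (parityTwist_apply_eq_zero_iff _ f μ).1 (apply_eq_zero_of_pdO_eq_zero (h (.inr j)) hj)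

theorem injective_of_coe_eq_swapHalves {r : ℕ} (hm : m ≤ 2 * r) {pr : Fin m → Fin m}
    (hpr : ∀ i : Fin m, (pr i : ℕ) = if (i : ℕ) < r then (i : ℕ) + r else (i : ℕ) - r) :
    Function.Injective pr := by
  intro a b hab
  have ha := hpr a
  have hb := hpr b
  rw [hab] at ha
  have := a.isLt
  have := b.isLt
  ext
  split_ifs at ha hb <;> omega

theorem injective_of_coe_eq_swapHalves_fixTail {s : ℕ} {pr : Fin n → Fin n}
    (hpr : ∀ j : Fin n, (pr j : ℕ) =
      if (j : ℕ) < s then (j : ℕ) + s else if (j : ℕ) < 2 * s then (j : ℕ) - s else (j : ℕ)) :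
    Function.Injective pr := by
  intro a b hab
  have ha := hpr a
  have hb := hpr b
  rw [hab] at ha
  ext
  split_ifs at ha hb <;> omega

end HamSup

open HamSup in
theorem ker_DH_general (F : Type) [Field F] (m n p : ℕ)
    (r s : ℕ) (hm : m = 2 * r)
    (t : Fin m → ℕ)
    (prE : Fin m → Fin m)
    (hprE : ∀ i : Fin m, (prE i : ℕ) = if (i : ℕ) < r then (i : ℕ) + r else (i : ℕ) - r)
    (prO : Fin n → Fin n)
    (hprO : ∀ j : Fin n, (prO j : ℕ) =
      if (j : ℕ) < s then (j : ℕ) + s else if (j : ℕ) < 2 * s then (j : ℕ) - s else (j : ℕ)) :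
    ∀ f : O F m n, f ∈ Ot F p t →
      (DH F r (Sum.map prE prO) f = 0 ↔ ∃ c : F, f = c • X F ((0 : Fin m → ℕ), (∅ : Finset (Fin n)))) := by
  intro f _
  have hpr : Function.Injective (Sum.map prE prO) :=
    (injective_of_coe_eq_swapHalves hm.le hprE).sumMap
      (injective_of_coe_eq_swapHalves_fixTail hprO)
  constructor
  · intro hf
    refine ⟨f (0, ∅), eq_smul_X_zero_of_forall_pd_parityTwist_eq_zero fun k => ?_⟩
    have hk := DH_apply_coordX r hpr f k
    rw [hf, LinearMap.zero_apply, eq_comm, smul_eq_zero] at hk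
    exact hk.resolve_left (tau_cast_ne_zero r k)
  · rintro ⟨c, rfl⟩
    rw [map_smul, DH_X_zero, smul_zero]

open HamSup in
/-- `Ker(D_H : O(m,n;t) → W(m,n;t)) = F·1`. -/
theorem ker_DH (F : Type) [Field F] (m n p : ℕ) (hp : p.Prime) (h3 : 3 < p)
    (hchar : ringChar F = p) (r s : ℕ) (hm : m = 2 * r) (hn : n = 2 * s ∨ n = 2 * s + 1)
    (t : Fin m → ℕ) (ht : ∀ i, 0 < t i)
    (prE : Fin m → Fin m)
    (hprE : ∀ i : Fin m, (prE i : ℕ) = if (i : ℕ) < r then (i : ℕ) + r else (i : ℕ) - r)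
    (prO : Fin n → Fin n)
    (hprO : ∀ j : Fin n, (prO j : ℕ) =
      if (j : ℕ) < s then (j : ℕ) + s else if (j : ℕ) < 2 * s then (j : ℕ) - s else (j : ℕ)) :
    ∀ f : O F m n, f ∈ Ot F p t →
      (DH F r (Sum.map prE prO) f = 0 ↔ ∃ c : F, f = c • X F ((0 : Fin m → ℕ), (∅ : Finset (Fin n)))) :=
  ker_DH_general F m n p r s hm t prE hprE prO hprO
end

section
/- For i ∈ {1,...,r} ∪ {m+1,...,m+s} and any basis element D_H(x^(α)x^u), the adjoint action satisfies [D_H(x_i x_{i'}), D_H(x^(α)x^u)] = (α_{i'}·δ_{i'∈I_0} − α_i·δ_{i∈I_0} + δ_{i'∈u} − δ_{i∈u}) D_H(x^(α)x^u), so D_H(x^(α)x^u) is a weight vector for the torus T. -/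
open Finsupp Finset

namespace HamSup

variable (F : Type) [Field F]

variable {m n : ℕ}

namespace HamSup

variable {F : Type} [Field F] {m n : ℕ}

lemma extend_X {N : Type} [AddCommGroup N] [Module F N] (v : Mono m n → N) (μ : Mono m n) :
    extend F v (X F μ) = v μ := by
  simp [extend, X]

lemma mulO_X_X (μ ν : Mono m n) : mulO F (X F μ) (X F ν) = mulMono F μ ν := by
  rw [mulO, extend_X, extend_X]

lemma pdE_X (a : Fin m) (μ : Mono m n) :
    pdE F a (X F μ) =
      if μ.1 a = 0 then 0 else X F (Function.update μ.1 a (μ.1 a - 1), μ.2) := by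
  rw [pdE, extend_X]

lemma pdO_X (b : Fin n) (μ : Mono m n) :
    pdO F b (X F μ) = if b ∈ μ.2 then
      ((-1 : F) ^ (μ.2.filter fun k => k < b).card) • X F (μ.1, μ.2.erase b) else 0 := by
  rw [pdO, extend_X]


lemma x_pd_even (a : Fin m) (ν : Mono m n) :
    mulO F (X F ((Pi.single a 1 : Fin m → ℕ), (∅ : Finset (Fin n)))) (pdE F a (X F ν)) =
      ((ν.1 a : F)) • X F ν := by
  rw [pdE_X]
  by_cases h : ν.1 a = 0
  · simp [h]
  · rw [if_neg h, mulO_X_X, mulMono, if_pos (by simp)]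
    have h1 : invCount (∅ : Finset (Fin n)) ν.2 = 0 := by simp [invCount]
    have h2 : (Pi.single a 1 + Function.update ν.1 a (ν.1 a - 1)) = ν.1 := by
      funext l
      by_cases hl : l = a
      · subst hl
        simp only [Pi.add_apply, Pi.single_eq_same, Function.update_self]
        omega
      · simp [Pi.single_apply, hl, Function.update_of_ne hl]
    have h3 : (∏ l, ((((Pi.single a 1 : Fin m → ℕ) l +
        Function.update ν.1 a (ν.1 a - 1) l).choose ((Pi.single a 1 : Fin m → ℕ) l) : ℕ) : F))
        = (ν.1 a : F) := by
      rw [Finset.prod_eq_single a]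
      · congr 1
        simp only [Pi.single_eq_same, Function.update_self]
        rw [Nat.add_comm, Nat.choose_one_right]
        omega
      · intro l _ hl
        simp [Pi.single_apply, hl]
      · simp
    simp only [h1, h2, h3, pow_zero, one_mul]
    simp

lemma x_pd_odd (b : Fin n) (ν : Mono m n) :
    mulO F (X F ((0 : Fin m → ℕ), ({b} : Finset (Fin n)))) (pdO F b (X F ν)) =
      (if b ∈ ν.2 then (1 : F) else 0) • X F ν := by
  rw [pdO_X]
  by_cases h : b ∈ ν.2
  · rw [if_pos h, if_pos h, map_smul, mulO_X_X, mulMono,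
      if_pos (by simp [Finset.disjoint_left])]
    have hc : invCount ({b} : Finset (Fin n)) (ν.2.erase b)
        = (ν.2.filter fun k => k < b).card := by
      rw [invCount, Finset.singleton_product, Finset.filter_map, Finset.card_map]
      congr 1
      rw [Finset.filter_erase]
      rw [Finset.erase_eq_of_notMem (by simp)]
      rfl
    have hprod : (∏ l, ((((0 : Fin m → ℕ) l + ν.1 l).choose ((0 : Fin m → ℕ) l) : ℕ) : F))
        = 1 := by simp
    have hmon : (((0 : Fin m → ℕ) + ν.1, ({b} : Finset (Fin n)) ∪ ν.2.erase b) : Mono m n)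
        = ν := by
      rw [Prod.ext_iff]
      constructor
      · simp
      · show {b} ∪ ν.2.erase b = ν.2
        rw [show ({b} : Finset (Fin n)) ∪ ν.2.erase b = insert b (ν.2.erase b) from rfl, Finset.insert_erase h]
    rw [hc, hprod, hmon, mul_one, smul_smul, ← pow_add]
    rw [Even.neg_one_pow ⟨_, rfl⟩, one_smul]
  · simp [h]

/-- The shape of the result of applying `∂_k` to a basis monomial. -/
def Shape (k : Fin m ⊕ Fin n) (μ μ' : Mono m n) : Prop :=
  match k with
  | .inl a => μ'.2 = μ.2 ∧ μ.1 a ≠ 0 ∧ μ'.1 = Function.update μ.1 a (μ.1 a - 1)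
  | .inr b => μ'.1 = μ.1 ∧ b ∈ μ.2 ∧ μ'.2 = μ.2.erase b

lemma pd_shape (k : Fin m ⊕ Fin n) (μ : Mono m n) :
    pd F k (X F μ) = 0 ∨
      ∃ (s : F) (μ' : Mono m n), pd F k (X F μ) = s • X F μ' ∧ Shape k μ μ' := by
  cases k with
  | inl a =>
    by_cases h : μ.1 a = 0
    · left
      show pdE F a (X F μ) = 0
      rw [pdE_X, if_pos h]
    · right
      refine ⟨1, (Function.update μ.1 a (μ.1 a - 1), μ.2), ?_, rfl, h, rfl⟩
      show pdE F a (X F μ) = _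
      rw [pdE_X, if_neg h, one_smul]
  | inr b =>
    by_cases h : b ∈ μ.2
    · right
      refine ⟨(-1 : F) ^ (μ.2.filter fun k => k < b).card, (μ.1, μ.2.erase b), ?_, rfl, h, rfl⟩
      show pdO F b (X F μ) = _
      rw [pdO_X, if_pos h]
    · left
      show pdO F b (X F μ) = 0
      rw [pdO_X, if_neg h]

lemma D_mulMono (D : Module.End F (O F m n)) (lam : Mono m n → F)
    (hD : ∀ ν, D (X F ν) = lam ν • X F ν) (μ' ν' : Mono m n) (a : F)
    (ha : Disjoint μ'.2 ν'.2 → lam (μ'.1 + ν'.1, μ'.2 ∪ ν'.2) = a) :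
    D (mulMono F μ' ν') = a • mulMono F μ' ν' := by
  rw [mulMono]
  split_ifs with h
  · rw [map_smul, hD, ← ha h, smul_comm]
  · simp

lemma term_diag (D : Module.End F (O F m n)) (lam : Mono m n → F)
    (hD : ∀ ν, D (X F ν) = lam ν • X F ν)
    (k k' : Fin m ⊕ Fin n) (μ ν : Mono m n) (a : F)
    (key : ∀ μ' ν' : Mono m n, Shape k μ μ' → Shape k' ν ν' → Disjoint μ'.2 ν'.2 →
      lam (μ'.1 + ν'.1, μ'.2 ∪ ν'.2) = a) :
    D (mulO F (pd F k (X F μ)) (pd F k' (X F ν)))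
      = a • mulO F (pd F k (X F μ)) (pd F k' (X F ν)) := by
  rcases pd_shape (F := F) k μ with h1 | ⟨s, μ', h1, hs1⟩
  · rw [h1]; simp
  rcases pd_shape (F := F) k' ν with h2 | ⟨t, ν', h2, hs2⟩
  · rw [h2]; simp
  rw [h1, h2]
  simp only [map_smul, LinearMap.smul_apply, mulO_X_X]
  rw [D_mulMono D lam hD μ' ν' a (key μ' ν' hs1 hs2), smul_comm s a, smul_comm t a]

lemma DHmono_apply (r' : ℕ) (pr : Fin m ⊕ Fin n → Fin m ⊕ Fin n) (μ ν : Mono m n) :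
    DHmono F r' pr μ (X F ν) = ∑ k : Fin m ⊕ Fin n,
      (((tau r' k : ℤ) : F) * (-1 : F) ^ (idxPar k * μ.2.card)) •
        mulO F (pd F k (X F μ)) (pd F (pr k) (X F ν)) := by
  rw [DHmono]
  simp [LinearMap.sum_apply, LinearMap.smul_apply, LinearMap.comp_apply]

lemma bracket_smul (D B : Module.End F (O F m n)) (c : F)
    (h : ∀ ν : Mono m n, D (B (X F ν)) - B (D (X F ν)) = c • B (X F ν)) :
    ⁅D, B⁆ = c • B := by
  rw [LieRing.of_associative_ring_bracket]
  refine Finsupp.lhom_ext fun ν b => ?_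
  have hb : (Finsupp.single ν b : O F m n) = b • X F ν := by
    simp [X, Finsupp.smul_single]
  rw [LinearMap.sub_apply, LinearMap.smul_apply, Module.End.mul_apply, Module.End.mul_apply, hb]
  simp only [map_smul]
  rw [← smul_sub, h ν, smul_comm b c]

lemma DH_bracket (D : Module.End F (O F m n)) (lam : Mono m n → F) (r' : ℕ)
    (pr : Fin m ⊕ Fin n → Fin m ⊕ Fin n) (μ : Mono m n) (c : F)
    (hD : ∀ ν, D (X F ν) = lam ν • X F ν)
    (key : ∀ (ν : Mono m n) (k : Fin m ⊕ Fin n) (μ' ν' : Mono m n),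
      Shape k μ μ' → Shape (pr k) ν ν' → Disjoint μ'.2 ν'.2 →
        lam (μ'.1 + ν'.1, μ'.2 ∪ ν'.2) = c + lam ν) :
    ⁅D, DHmono F r' pr μ⁆ = c • DHmono F r' pr μ := by
  apply bracket_smul
  intro ν
  have h1 : D (DHmono F r' pr μ (X F ν)) = (c + lam ν) • DHmono F r' pr μ (X F ν) := by
    rw [DHmono_apply, map_sum, Finset.smul_sum]
    refine Finset.sum_congr rfl fun k _ => ?_
    rw [map_smul, term_diag D lam hD k (pr k) μ ν (c + lam ν) (key ν k), smul_comm]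
  rw [h1, hD ν, map_smul, add_smul, add_sub_cancel_right]

lemma diag_even (r' : ℕ) (pr : Fin m ⊕ Fin n → Fin m ⊕ Fin n) (i i' : Fin m)
    (hne : i ≠ i') (hlt : (i : ℕ) < r') (hge : ¬ ((i' : ℕ) < r'))
    (hp1 : pr (Sum.inl i) = Sum.inl i') (hp2 : pr (Sum.inl i') = Sum.inl i)
    (ν : Mono m n) :
    DHmono F r' pr ((Pi.single i 1 + Pi.single i' 1 : Fin m → ℕ), (∅ : Finset (Fin n)))
        (X F ν)
      = ((ν.1 i' : F) - (ν.1 i : F)) • X F ν := by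
  have hone : (Pi.single i 1 + Pi.single i' 1 : Fin m → ℕ) i = 1 := by
    simp [Pi.single_apply, hne]
  have hone' : (Pi.single i 1 + Pi.single i' 1 : Fin m → ℕ) i' = 1 := by
    simp [Pi.single_apply, Ne.symm hne]
  have e1 : pd F (Sum.inl i)
      (X F ((Pi.single i 1 + Pi.single i' 1 : Fin m → ℕ), (∅ : Finset (Fin n))))
      = X F ((Pi.single i' 1 : Fin m → ℕ), (∅ : Finset (Fin n))) := by
    show pdE F i _ = _
    rw [pdE_X, if_neg (by simp [Pi.single_apply, hne])]
    congr 2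
    funext l
    by_cases hl : l = i
    · subst hl
      simp [Function.update_self, hone, Pi.single_apply, hne]
    · simp [Function.update_of_ne hl, Pi.single_apply, hl]
  have e2 : pd F (Sum.inl i')
      (X F ((Pi.single i 1 + Pi.single i' 1 : Fin m → ℕ), (∅ : Finset (Fin n))))
      = X F ((Pi.single i 1 : Fin m → ℕ), (∅ : Finset (Fin n))) := by
    show pdE F i' _ = _
    rw [pdE_X, if_neg (by simp [Pi.single_apply, Ne.symm hne])]
    congr 2
    funext l
    by_cases hl : l = i'
    · subst hl
      simp [Function.update_self, hone', Pi.single_apply, Ne.symm hne]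
    · simp [Function.update_of_ne hl, Pi.single_apply, hl]
  rw [DHmono_apply]
  rw [Fintype.sum_eq_add (Sum.inl i) (Sum.inl i') (by simpa using hne) ?_]
  · rw [e1, e2, hp1, hp2]
    show _ • mulO F _ (pdE F i' (X F ν)) + _ • mulO F _ (pdE F i (X F ν)) = _
    rw [x_pd_even, x_pd_even]
    simp only [tau, idxPar, Sum.elim_inl, if_pos hlt, if_neg hge, Finset.card_empty,
      Nat.mul_zero, pow_zero, mul_one, Int.cast_one, Int.cast_neg, one_smul]
    rw [neg_one_smul, sub_smul, sub_eq_add_neg]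
  · rintro (a | b) ⟨hk1, hk2⟩
    · have ha1 : a ≠ i := fun h => hk1 (by rw [h])
      have ha2 : a ≠ i' := fun h => hk2 (by rw [h])
      have hz : (Pi.single i 1 + Pi.single i' 1 : Fin m → ℕ) a = 0 := by
        simp [Pi.single_apply, ha1, ha2]
      have : pd F (Sum.inl a)
          (X F ((Pi.single i 1 + Pi.single i' 1 : Fin m → ℕ), (∅ : Finset (Fin n)))) = 0 := by
        show pdE F a _ = _
        rw [pdE_X, if_pos hz]
      rw [this]
      simp
    · have : pd F (Sum.inr b)
          (X F ((Pi.single i 1 + Pi.single i' 1 : Fin m → ℕ), (∅ : Finset (Fin n)))) = 0 := by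
        show pdO F b _ = _
        rw [pdO_X, if_neg (by simp)]
      rw [this]
      simp

lemma diag_odd (r' : ℕ) (pr : Fin m ⊕ Fin n → Fin m ⊕ Fin n) (j j' : Fin n)
    (hlt : j < j')
    (hp1 : pr (Sum.inr j) = Sum.inr j') (hp2 : pr (Sum.inr j') = Sum.inr j)
    (ν : Mono m n) :
    DHmono F r' pr ((0 : Fin m → ℕ), ({j, j'} : Finset (Fin n))) (X F ν)
      = ((if j' ∈ ν.2 then (1 : F) else 0) - (if j ∈ ν.2 then (1 : F) else 0)) • X F ν := by
  have hne : j ≠ j' := ne_of_lt hlt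
  have hcard : ({j, j'} : Finset (Fin n)).card = 2 := by
    rw [Finset.card_insert_of_notMem (by simp [hne]), Finset.card_singleton]
  have e1 : pd F (Sum.inr j) (X F ((0 : Fin m → ℕ), ({j, j'} : Finset (Fin n))))
      = X F ((0 : Fin m → ℕ), ({j'} : Finset (Fin n))) := by
    show pdO F j _ = _
    rw [pdO_X, if_pos (by simp)]
    have hf : (({j, j'} : Finset (Fin n)).filter fun k => k < j) = ∅ := by
      rw [Finset.filter_eq_empty_iff]
      intro x hx
      rcases Finset.mem_insert.mp hx with h | h
      · subst h; exact lt_irrefl _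
      · rw [Finset.mem_singleton] at h; subst h; exact fun h => absurd hlt (asymm h)
    rw [hf]
    simp only [Finset.card_empty, pow_zero, one_smul]
    have he1 : (((0 : Fin m → ℕ), ({j, j'} : Finset (Fin n))) : Mono m n).2.erase j
        = ({j'} : Finset (Fin n)) := Finset.erase_insert (by simp [hne])
    rw [he1]
  have e2 : pd F (Sum.inr j') (X F ((0 : Fin m → ℕ), ({j, j'} : Finset (Fin n))))
      = (-1 : F) • X F ((0 : Fin m → ℕ), ({j} : Finset (Fin n))) := by
    show pdO F j' _ = _
    rw [pdO_X, if_pos (by simp)]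
    have hf : (({j, j'} : Finset (Fin n)).filter fun k => k < j') = {j} := by
      ext x
      simp only [Finset.mem_filter, Finset.mem_insert, Finset.mem_singleton]
      constructor
      · rintro ⟨h | h, hx⟩
        · exact h
        · subst h; exact absurd hx (lt_irrefl _)
      · rintro rfl; exact ⟨Or.inl rfl, hlt⟩
    rw [hf]
    have he2 : (((0 : Fin m → ℕ), ({j, j'} : Finset (Fin n))) : Mono m n).2.erase j'
        = ({j} : Finset (Fin n)) := by
      show ({j, j'} : Finset (Fin n)).erase j' = {j}
      rw [Finset.erase_insert_of_ne hne, Finset.erase_singleton]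
      rfl
    rw [he2]
    simp
  rw [DHmono_apply]
  rw [Fintype.sum_eq_add (Sum.inr j) (Sum.inr j') (by simpa using hne) ?_]
  · rw [e1, e2, hp1, hp2]
    simp only [tau, idxPar, Sum.elim_inr, Int.cast_one, hcard, one_mul, map_smul,
      LinearMap.smul_apply]
    show (-1 : F) ^ 2 • mulO F _ (pdO F j' (X F ν))
        + (-1 : F) ^ 2 • ((-1 : F) • mulO F _ (pdO F j (X F ν))) = _
    rw [x_pd_odd, x_pd_odd]
    simp only [smul_smul, ← add_smul]
    congr 1
    split_ifs <;> norm_num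
  · rintro (a | b) ⟨hk1, hk2⟩
    · have : pd F (Sum.inl a) (X F ((0 : Fin m → ℕ), ({j, j'} : Finset (Fin n)))) = 0 := by
        show pdE F a _ = _
        rw [pdE_X]
        simp
      rw [this]
      simp
    · have hb1 : b ≠ j := fun h => hk1 (by rw [h])
      have hb2 : b ≠ j' := fun h => hk2 (by rw [h])
      have : pd F (Sum.inr b) (X F ((0 : Fin m → ℕ), ({j, j'} : Finset (Fin n)))) = 0 := by
        show pdO F b _ = _
        rw [pdO_X, if_neg (by simp [hb1, hb2])]
      rw [this]
      simp

lemma ind_union {s t : Finset (Fin n)} (h : Disjoint s t) (x : Fin n) :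
    (if x ∈ s ∪ t then (1 : F) else 0)
      = (if x ∈ s then (1 : F) else 0) + (if x ∈ t then (1 : F) else 0) := by
  by_cases h1 : x ∈ s
  · rw [if_pos (Finset.mem_union_left _ h1), if_pos h1,
      if_neg (Finset.disjoint_left.mp h h1), add_zero]
  · by_cases h2 : x ∈ t
    · rw [if_pos (Finset.mem_union_right _ h2), if_neg h1, if_pos h2, zero_add]
    · rw [if_neg (by simp [h1, h2]), if_neg h1, if_neg h2, add_zero]

lemma ind_erase {s : Finset (Fin n)} {c x : Fin n} (hx : x ≠ c) :
    (if x ∈ s.erase c then (1 : F) else 0) = (if x ∈ s then (1 : F) else 0) := by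
  simp [Finset.mem_erase, hx]

lemma ind_erase_self {s : Finset (Fin n)} {c : Fin n} :
    (if c ∈ s.erase c then (1 : F) else 0) = 0 := by simp

end HamSup

end HamSup


open HamSup in
/-- every basis element `D_H(x^(α)x^u)` is a weight vector for the torus `T`. -/
theorem DH_weight_vector (F : Type) [Field F] (m n p : ℕ) (hp : p.Prime) (h3 : 3 < p)
    (hchar : ringChar F = p) (r s : ℕ) (hm : m = 2 * r) (hn : n = 2 * s ∨ n = 2 * s + 1)
    (t : Fin m → ℕ) (ht : ∀ i, 0 < t i)
    (prE : Fin m → Fin m)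
    (hprE : ∀ i : Fin m, (prE i : ℕ) = if (i : ℕ) < r then (i : ℕ) + r else (i : ℕ) - r)
    (prO : Fin n → Fin n)
    (hprO : ∀ j : Fin n, (prO j : ℕ) =
      if (j : ℕ) < s then (j : ℕ) + s else if (j : ℕ) < 2 * s then (j : ℕ) - s else (j : ℕ)) :
    (∀ i : Fin m, (i : ℕ) < r → ∀ μ : Mono m n, inA p t μ.1 →
      ⁅DHmono F r (Sum.map prE prO) ((Pi.single i 1 + Pi.single (prE i) 1 : Fin m → ℕ),
          (∅ : Finset (Fin n))), DHmono F r (Sum.map prE prO) μ⁆ =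
        (((μ.1 (prE i) : ℤ) - (μ.1 i : ℤ) : ℤ) : F) • DHmono F r (Sum.map prE prO) μ) ∧
    (∀ j : Fin n, (j : ℕ) < s → ∀ μ : Mono m n, inA p t μ.1 →
      ⁅DHmono F r (Sum.map prE prO) ((0 : Fin m → ℕ), ({j, prO j} : Finset (Fin n))),
          DHmono F r (Sum.map prE prO) μ⁆ =
        ((((if prO j ∈ μ.2 then 1 else 0) - (if j ∈ μ.2 then 1 else 0) : ℤ)) : F) •
          DHmono F r (Sum.map prE prO) μ) := by
  constructor
  · intro i hi μ _
    set i' := prE i with hi'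
    have hvi' : (i' : ℕ) = (i : ℕ) + r := by rw [hi', hprE i, if_pos hi]
    have hne : i ≠ i' := by
      intro h
      rw [← h] at hvi'
      omega
    have hge : ¬ ((i' : ℕ) < r) := by omega
    have hpp : prE i' = i := by
      apply Fin.ext
      rw [hprE i', if_neg hge, hvi']
      omega
    have hswap : ∀ a : Fin m, a ≠ i → a ≠ i' → prE a ≠ i ∧ prE a ≠ i' := by
      intro a ha1 ha2
      have hva := hprE a
      have h1 : (a : ℕ) ≠ (i : ℕ) := fun h => ha1 (Fin.ext h)
      have h2 : (a : ℕ) ≠ (i' : ℕ) := fun h => ha2 (Fin.ext h)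
      have hb := a.isLt
      constructor <;> intro h <;> apply absurd (congrArg Fin.val h) <;> rw [hva] <;>
        split_ifs <;> omega
    have hc : (((μ.1 i' : ℤ) - (μ.1 i : ℤ) : ℤ) : F) = (μ.1 i' : F) - (μ.1 i : F) := by
      push_cast
      ring
    rw [hc]
    apply HamSup.DH_bracket _ (fun ν : Mono m n => ((ν.1 i' : F) - (ν.1 i : F)))
    · intro ν
      exact HamSup.diag_even r (Sum.map prE prO) i i' hne hi hge rfl
        (by rw [Sum.map_inl, hpp]) ν
    · intro ν k μ' ν' hs1 hs2 _
      show ((μ'.1 + ν'.1) i' : F) - ((μ'.1 + ν'.1) i : F) = _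
      simp only [Pi.add_apply]
      cases k with
      | inr b =>
        obtain ⟨hA, -, -⟩ := hs1
        obtain ⟨hB, -, -⟩ := hs2
        rw [hA, hB]
        push_cast
        ring
      | inl a =>
        obtain ⟨-, hA0, hA⟩ := hs1
        obtain ⟨-, hB0, hB⟩ := hs2
        have hNat : μ'.1 i' + ν'.1 i' + (μ.1 i + ν.1 i)
            = μ.1 i' + ν.1 i' + (μ'.1 i + ν'.1 i) := by
          by_cases hai : a = i
          · have hpa : prE a = i' := by rw [hai, ← hi']
            rw [hpa] at hB hB0
            rw [hai] at hA hA0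
            have e1 : μ'.1 i = μ.1 i - 1 := by rw [hA, Function.update_self]
            have e2 : μ'.1 i' = μ.1 i' := by rw [hA, Function.update_of_ne (Ne.symm hne)]
            have e3 : ν'.1 i' = ν.1 i' - 1 := by rw [hB, Function.update_self]
            have e4 : ν'.1 i = ν.1 i := by rw [hB, Function.update_of_ne hne]
            omega
          · by_cases hai' : a = i'
            · have hpa : prE a = i := by rw [hai', hpp]
              rw [hpa] at hB hB0
              rw [hai'] at hA hA0
              have e1 : μ'.1 i' = μ.1 i' - 1 := by rw [hA, Function.update_self]
              have e2 : μ'.1 i = μ.1 i := by rw [hA, Function.update_of_ne hne]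
              have e3 : ν'.1 i = ν.1 i - 1 := by rw [hB, Function.update_self]
              have e4 : ν'.1 i' = ν.1 i' := by rw [hB, Function.update_of_ne (Ne.symm hne)]
              omega
            · obtain ⟨hw1, hw2⟩ := hswap a hai hai'
              have e1 : μ'.1 i = μ.1 i := by rw [hA, Function.update_of_ne (Ne.symm hai)]
              have e2 : μ'.1 i' = μ.1 i' := by rw [hA, Function.update_of_ne (Ne.symm hai')]
              have e3 : ν'.1 i = ν.1 i := by rw [hB, Function.update_of_ne (Ne.symm hw1)]
              have e4 : ν'.1 i' = ν.1 i' := by rw [hB, Function.update_of_ne (Ne.symm hw2)]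
              omega
        have hF : (μ'.1 i' : F) + (ν'.1 i' : F) + ((μ.1 i : F) + (ν.1 i : F))
            = (μ.1 i' : F) + (ν.1 i' : F) + ((μ'.1 i : F) + (ν'.1 i : F)) := by
          exact_mod_cast congrArg (fun x : ℕ => (x : F)) hNat
        push_cast
        linear_combination hF
  · intro j hj μ _
    set j' := prO j with hj'
    have hvj' : (j' : ℕ) = (j : ℕ) + s := by rw [hj', hprO j, if_pos hj]
    have hlt : j < j' := by
      rw [Fin.lt_def]
      omega
    have hne : j ≠ j' := ne_of_lt hlt
    have hpp : prO j' = j := by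
      apply Fin.ext
      rw [hprO j', hvj']
      rw [if_neg (by omega), if_pos (by omega)]
      omega
    have hswap : ∀ b : Fin n, b ≠ j → b ≠ j' → prO b ≠ j ∧ prO b ≠ j' := by
      intro b hb1 hb2
      have hvb := hprO b
      have h1 : (b : ℕ) ≠ (j : ℕ) := fun h => hb1 (Fin.ext h)
      have h2 : (b : ℕ) ≠ (j' : ℕ) := fun h => hb2 (Fin.ext h)
      constructor <;> intro h <;> apply absurd (congrArg Fin.val h) <;> rw [hvb] <;>
        split_ifs <;> omega
    have hc : ((((if j' ∈ μ.2 then 1 else 0) - (if j ∈ μ.2 then 1 else 0) : ℤ)) : F)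
        = (if j' ∈ μ.2 then (1 : F) else 0) - (if j ∈ μ.2 then (1 : F) else 0) := by
      split_ifs <;> norm_num
    rw [hc]
    apply HamSup.DH_bracket _ (fun ν : Mono m n =>
      (if j' ∈ ν.2 then (1 : F) else 0) - (if j ∈ ν.2 then (1 : F) else 0))
    · intro ν
      exact HamSup.diag_odd r (Sum.map prE prO) j j' hlt rfl (by rw [Sum.map_inr, hpp]) ν
    · intro ν k μ' ν' hs1 hs2 hdis
      show (if j' ∈ μ'.2 ∪ ν'.2 then (1 : F) else 0)
          - (if j ∈ μ'.2 ∪ ν'.2 then (1 : F) else 0) = _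
      rw [HamSup.ind_union hdis j', HamSup.ind_union hdis j]
      cases k with
      | inl a =>
        obtain ⟨hA, -, -⟩ := hs1
        obtain ⟨hB, -, -⟩ := hs2
        rw [hA, hB]
        ring
      | inr b =>
        obtain ⟨-, hbμ, hA⟩ := hs1
        obtain ⟨-, hbν, hB⟩ := hs2
        by_cases hbj : b = j
        · have hpb : prO b = j' := by rw [hbj, ← hj']
          rw [hpb] at hB hbν
          rw [hbj] at hA hbμ
          rw [hA, hB, HamSup.ind_erase (F := F) (Ne.symm hne), HamSup.ind_erase_self, HamSup.ind_erase_self,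
            HamSup.ind_erase (F := F) hne, if_pos hbμ, if_pos hbν]
          ring
        · by_cases hbj2 : b = j'
          · have hpb : prO b = j := by rw [hbj2, hpp]
            rw [hpb] at hB hbν
            rw [hbj2] at hA hbμ
            rw [hA, hB, HamSup.ind_erase_self, HamSup.ind_erase (F := F) hne,
              HamSup.ind_erase (F := F) (Ne.symm hne), HamSup.ind_erase_self, if_pos hbμ, if_pos hbν]
            ring
          · obtain ⟨hw1, hw2⟩ := hswap b hbj hbj2
            rw [hA, hB, HamSup.ind_erase (F := F) (Ne.symm hbj2), HamSup.ind_erase (F := F) (Ne.symm hw2),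
              HamSup.ind_erase (F := F) (Ne.symm hbj), HamSup.ind_erase (F := F) (Ne.symm hw1)]
            ring
end

section
/- Let L be a ℤ-graded Lie algebra, V a ℤ-graded L-module, and T ⊆ L_0 a torus acting on L and V with weight space decompositions L = ⊕_α L_α and V = ⊕_β V_β. If φ ∈ Der(L, V) is a weight-derivation of nonzero weight α ≠ 0, then φ is inner; consequently every derivation from L to V is congruent to a zero-weight derivation modulo inner derivations. -/
/-!
Let `L` act on `Hom(L, V)` by `⁅x, f⁆ = ⁅x, f ·⁆ - f ⁅x, ·⁆`. The Leibniz rule says exactly that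
for a derivation `φ` the map `⁅x, φ⁆` is the inner derivation `⁅·, φ x⁆`. Hence if
`⁅h, φ⁆ = α h • φ` with `α h ≠ 0`, then `φ` is the inner derivation of `(α h)⁻¹ • φ h`.

For the second claim, every `h ∈ T` acts diagonalizably on `Hom(L, V)` (rank-one maps built from
weight vectors are eigenvectors), the elements of `T` commute, and they map derivations to inner
derivations. The `h`-eigencomponents of a derivation are again derivations, and those with nonzero
eigenvalue are `h`-images, hence inner. Removing them for one `h ∈ T` after another, finitely many
of which cut out the common kernel by finite-dimensionality, leaves a weight-zero derivation.
-/

open Module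

namespace Module.End

variable {K M N : Type*} [Field K] [AddCommGroup M] [Module K M] [AddCommGroup N] [Module K N]

lemma iSup_eigenspace_eq_top_of_span_eq_top {f : End K M} {s : Set M}
    (hs : ∀ m ∈ s, ∃ μ : K, f m = μ • m) (hspan : Submodule.span K s = ⊤) :
    ⨆ μ, f.eigenspace μ = ⊤ := by
  rw [eq_top_iff, ← hspan, Submodule.span_le]
  intro m hm
  obtain ⟨μ, hμ⟩ := hs m hm
  exact Submodule.mem_iSup_of_mem μ (mem_eigenspace_iff.mpr hμ)

lemma exists_basis_eigenvectors {f : End K M} (hf : ⨆ μ, f.eigenspace μ = ⊤) :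
    ∃ (s : Set M) (B : Basis s K M), ∀ i, ∃ μ : K, f (B i) = μ • B i := by
  obtain ⟨s, hs, hspan, hli⟩ := exists_linearIndependent K (⋃ μ, (f.eigenspace μ : Set M))
  refine ⟨s, Basis.mk hli ?_, fun i => ?_⟩
  · rw [Subtype.range_coe, hspan, ← Submodule.iSup_eq_span, hf]
  · obtain ⟨μ, hμ⟩ := Set.mem_iUnion.mp (hs i.2)
    exact ⟨μ, by rw [Basis.mk_apply]; exact mem_eigenspace_iff.mp hμ⟩

variable [FiniteDimensional K M]

lemma iSup_eigenspace_eq_top_of_apply_eq_comp_sub_comp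
    {a : End K M} {b : End K N} (ha : ⨆ μ, a.eigenspace μ = ⊤) (hb : ⨆ ν, b.eigenspace ν = ⊤)
    {D : End K (M →ₗ[K] N)} (hD : ∀ g, D g = b ∘ₗ g - g ∘ₗ a) :
    ⨆ ν, D.eigenspace ν = ⊤ := by
  classical
  obtain ⟨s, B, hB⟩ := exists_basis_eigenvectors ha
  choose μ hμ using hB
  have : Fintype s := FiniteDimensional.fintypeBasisIndex B
  have rankOne_mem : ∀ i ν, ∀ n ∈ b.eigenspace ν,
      (B.coord i).smulRight n ∈ D.eigenspace (ν - μ i) := by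
    intro i ν n hn
    rw [mem_eigenspace_iff] at hn ⊢
    refine B.ext fun k => ?_
    rw [hD]
    by_cases hki : k = i
    · subst hki; simp [hμ, hn, sub_smul]
    · simp [hμ, hki]
  have rankOne_mem_iSup : ∀ i n, (B.coord i).smulRight n ∈ ⨆ ν, D.eigenspace ν := by
    intro i n
    have : ⨆ ν, b.eigenspace ν ≤
        (⨆ ν, D.eigenspace ν).comap (LinearMap.smulRightₗ (B.coord i)) :=
      iSup_le fun ν n hn => Submodule.mem_iSup_of_mem _ (rankOne_mem i ν n hn)
    exact this (hb ▸ Submodule.mem_top)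
  rw [eq_top_iff]
  intro g _
  have hg : g = ∑ i, (B.coord i).smulRight (g (B i)) :=
    B.ext fun k => by simp [Finsupp.single_apply]
  rw [hg]
  exact Submodule.sum_mem _ fun i _ => rankOne_mem_iSup i _

lemma le_inf_ker_sup_map_of_iSup_eigenspace_eq_top {f : End K M}
    (hf : ⨆ μ, f.eigenspace μ = ⊤) {p : Submodule K M} (hp : ∀ x ∈ p, f x ∈ p) :
    p ≤ (p ⊓ LinearMap.ker f) ⊔ p.map f :=
  calc p = ⨆ μ, p ⊓ f.eigenspace μ := by
        rw [← Submodule.inf_iSup_genEigenspace hp, hf, inf_top_eq]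
    _ ≤ (p ⊓ LinearMap.ker f) ⊔ p.map f := iSup_le fun μ => by
        rcases eq_or_ne μ 0 with rfl | hμ
        · rw [eigenspace_zero]; exact le_sup_left
        · rintro x ⟨hxp, hx⟩
          rw [SetLike.mem_coe, mem_eigenspace_iff] at hx
          refine Submodule.mem_sup_right ⟨μ⁻¹ • x, p.smul_mem _ hxp, ?_⟩
          rw [map_smul, hx, smul_smul, inv_mul_cancel₀ hμ, one_smul]

variable {ι : Type*} {f : ι → End K M}

lemma le_inf_finsetInf_ker_sup_of_commute (hcomm : ∀ i j, Commute (f i) (f j))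
    (hf : ∀ i, ⨆ μ, (f i).eigenspace μ = ⊤) {p I : Submodule K M}
    (hp : ∀ i, ∀ x ∈ p, f i x ∈ p) (hpI : ∀ i, p.map (f i) ≤ I) (s : Finset ι) :
    p ≤ (p ⊓ s.inf fun i => LinearMap.ker (f i)) ⊔ I := by
  classical
  induction s using Finset.induction_on generalizing p with
  | empty => simp
  | insert j s _ ih =>
    have hker : ∀ i, ∀ x ∈ p ⊓ LinearMap.ker (f j), f i x ∈ p ⊓ LinearMap.ker (f j) := by
      rintro i x ⟨hxp, hxk⟩
      refine ⟨hp i x hxp, ?_⟩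
      rw [SetLike.mem_coe, LinearMap.mem_ker] at hxk ⊢
      rw [← Module.End.mul_apply, (hcomm j i).eq, Module.End.mul_apply, hxk, map_zero]
    calc p ≤ (p ⊓ LinearMap.ker (f j)) ⊔ p.map (f j) :=
          le_inf_ker_sup_map_of_iSup_eigenspace_eq_top (hf j) (hp j)
      _ ≤ ((p ⊓ LinearMap.ker (f j) ⊓ s.inf fun i => LinearMap.ker (f i)) ⊔ I) ⊔ I :=
          sup_le_sup (ih hker fun i => (Submodule.map_mono inf_le_left).trans (hpI i)) (hpI j)
      _ = (p ⊓ (insert j s).inf fun i => LinearMap.ker (f i)) ⊔ I := by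
          rw [Finset.inf_insert, inf_assoc, sup_assoc, sup_idem]

lemma le_inf_iInf_ker_sup_of_commute (hcomm : ∀ i j, Commute (f i) (f j))
    (hf : ∀ i, ⨆ μ, (f i).eigenspace μ = ⊤) {p I : Submodule K M}
    (hp : ∀ i, ∀ x ∈ p, f i x ∈ p) (hpI : ∀ i, p.map (f i) ≤ I) :
    p ≤ (p ⊓ ⨅ i, LinearMap.ker (f i)) ⊔ I := by
  obtain ⟨s, hs⟩ := Finset.exists_inf_eq_iInf fun i => LinearMap.ker (f i)
  rw [← hs]
  exact le_inf_finsetInf_ker_sup_of_commute hcomm hf hp hpI s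

end Module.End

section LieDerivations

variable (F L V : Type*) [Field F] [LieRing L] [LieAlgebra F L] [AddCommGroup V] [Module F V]
  [LieRingModule L V] [LieModule F L V]

def lieDerivations : Submodule F (L →ₗ[F] V) where
  carrier := {φ | ∀ x y : L, φ ⁅x, y⁆ = ⁅x, φ y⁆ - ⁅y, φ x⁆}
  add_mem' hφ hψ x y := by simp [hφ x y, hψ x y]; abel
  zero_mem' x y := by simp
  smul_mem' c φ hφ x y := by simp [hφ x y, smul_sub]

abbrev innerDerivation : V →ₗ[F] L →ₗ[F] V :=
  (LieModule.toEnd F L V : L →ₗ[F] Module.End F V).flip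

variable {F L V}

lemma innerDerivation_mem_lieDerivations (v : V) :
    innerDerivation F L V v ∈ lieDerivations F L V := fun x y => by simp

lemma lie_eq_innerDerivation {φ : L →ₗ[F] V} (hφ : φ ∈ lieDerivations F L V) (x : L) :
    ⁅x, φ⁆ = innerDerivation F L V (φ x) := by
  ext y
  simp [LieHom.lie_apply, hφ x y]

lemma lie_mem_range_innerDerivation {φ : L →ₗ[F] V} (hφ : φ ∈ lieDerivations F L V) (x : L) :
    ⁅x, φ⁆ ∈ LinearMap.range (innerDerivation F L V) :=
  ⟨φ x, (lie_eq_innerDerivation hφ x).symm⟩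

lemma lie_mem_lieDerivations {φ : L →ₗ[F] V} (hφ : φ ∈ lieDerivations F L V) (x : L) :
    ⁅x, φ⁆ ∈ lieDerivations F L V := by
  rw [lie_eq_innerDerivation hφ]
  exact innerDerivation_mem_lieDerivations _

lemma eq_innerDerivation_of_lie_eq_smul {φ : L →ₗ[F] V} (hφ : φ ∈ lieDerivations F L V)
    {x : L} {c : F} (hc : c ≠ 0) (hx : ⁅x, φ⁆ = c • φ) :
    φ = innerDerivation F L V (c⁻¹ • φ x) := by
  rw [map_smul, ← lie_eq_innerDerivation hφ, hx, smul_smul, inv_mul_cancel₀ hc, one_smul]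

lemma iSup_eigenspace_toEnd_eq_top {M : Type*} [AddCommGroup M] [Module F M]
    [LieRingModule L M] [LieModule F L M] (T : LieSubalgebra F L)
    (hM : ∀ m : M, m ∈ Submodule.span F {w : M | ∃ β : T → F, ∀ h : T, ⁅(h : L), w⁆ = β h • w})
    (h : T) : ⨆ μ, (LieModule.toEnd F L M h).eigenspace μ = ⊤ :=
  Module.End.iSup_eigenspace_eq_top_of_span_eq_top
    (s := {w : M | ∃ β : T → F, ∀ h : T, ⁅(h : L), w⁆ = β h • w}) (fun _ ⟨β, hβ⟩ => ⟨β h, hβ h⟩)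
    (Submodule.eq_top_iff'.mpr hM)

lemma iSup_eigenspace_toEnd_linearMap_eq_top [FiniteDimensional F L] (T : LieSubalgebra F L)
    (hL : ∀ x : L, x ∈ Submodule.span F {y : L | ∃ β : T → F, ∀ h : T, ⁅(h : L), y⁆ = β h • y})
    (hV : ∀ v : V, v ∈ Submodule.span F {w : V | ∃ β : T → F, ∀ h : T, ⁅(h : L), w⁆ = β h • w})
    (h : T) : ⨆ μ, (LieModule.toEnd F T (L →ₗ[F] V) h).eigenspace μ = ⊤ :=
  Module.End.iSup_eigenspace_eq_top_of_apply_eq_comp_sub_comp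
    (iSup_eigenspace_toEnd_eq_top T hL h) (iSup_eigenspace_toEnd_eq_top T hV h)
    fun g => by ext; simp [LieHom.lie_apply]

end LieDerivations

theorem weight_derivation_inner_general (F : Type) [Field F] (L V : Type)
    [LieRing L] [LieAlgebra F L] [AddCommGroup V] [Module F V]
    [LieRingModule L V] [LieModule F L V]
    [FiniteDimensional F L] [FiniteDimensional F V]
    (T : LieSubalgebra F L) (hT : IsLieAbelian T)
    (hLdec : ∀ x : L, x ∈ Submodule.span F
      {y : L | ∃ β : T → F, ∀ h : T, ⁅(h : L), y⁆ = β h • y})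
    (hVdec : ∀ v : V, v ∈ Submodule.span F
      {w : V | ∃ β : T → F, ∀ h : T, ⁅(h : L), w⁆ = β h • w}) :
    (∀ (φ : L →ₗ[F] V), (∀ x y : L, φ ⁅x, y⁆ = ⁅x, φ y⁆ - ⁅y, φ x⁆) →
      ∀ (α : T →ₗ[F] F), α ≠ 0 →
      (∀ (h : T) (x : L), ⁅(h : L), φ x⁆ - φ ⁅(h : L), x⁆ = α h • φ x) →
      ∃ v : V, ∀ x : L, φ x = ⁅x, v⁆) ∧
    (∀ (φ : L →ₗ[F] V), (∀ x y : L, φ ⁅x, y⁆ = ⁅x, φ y⁆ - ⁅y, φ x⁆) →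
      ∃ (v : V) (ψ : L →ₗ[F] V),
        (∀ x y : L, ψ ⁅x, y⁆ = ⁅x, ψ y⁆ - ⁅y, ψ x⁆) ∧
        (∀ (h : T) (x : L), ⁅(h : L), ψ x⁆ = ψ ⁅(h : L), x⁆) ∧
        (∀ x : L, φ x = ψ x + ⁅x, v⁆)) := by
  constructor
  · intro φ hφ α hα hweight
    obtain ⟨h, hh⟩ : ∃ h, α h ≠ 0 := not_forall.mp fun h => hα (LinearMap.ext h)
    have hlie : ⁅(h : L), φ⁆ = α h • φ := LinearMap.ext fun x => by
      rw [LieHom.lie_apply, hweight]; rfl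
    exact ⟨_, LinearMap.ext_iff.mp (eq_innerDerivation_of_lie_eq_smul hφ hh hlie)⟩
  · intro φ hφ
    have hcomm : ∀ h h' : T, Commute (LieModule.toEnd F T (L →ₗ[F] V) h)
        (LieModule.toEnd F T (L →ₗ[F] V) h') := fun h h' =>
      LieModule.commute_toEnd_of_mem_center_left _ (by simp [trivial_lie_zero]) h'
    have hsplit := Module.End.le_inf_iInf_ker_sup_of_commute hcomm
      (iSup_eigenspace_toEnd_linearMap_eq_top T hLdec hVdec)
      (p := lieDerivations F L V) (I := LinearMap.range (innerDerivation F L V))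
      (fun h _ hg => lie_mem_lieDerivations hg (h : L))
      (fun h => Submodule.map_le_iff_le_comap.mpr fun _ hg => lie_mem_range_innerDerivation hg h)
    obtain ⟨ψ, ⟨hψ, hψT⟩, _, ⟨v, rfl⟩, hsum⟩ := Submodule.mem_sup.mp (hsplit hφ)
    refine ⟨v, ψ, hψ, fun h x => ?_, fun x => by rw [← hsum]; rfl⟩
    have hψh : ⁅(h : L), ψ⁆ = 0 := Submodule.mem_iInf _ |>.mp hψT h
    simpa [LieHom.lie_apply, sub_eq_zero] using LinearMap.congr_fun hψh x

/-- nonzero-weight derivations are inner; every derivation is inner modulo a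
zero-weight derivation. -/
theorem weight_derivation_inner (F : Type) [Field F] (L V : Type)
    [LieRing L] [LieAlgebra F L] [AddCommGroup V] [Module F V]
    [LieRingModule L V] [LieModule F L V]
    [FiniteDimensional F L] [FiniteDimensional F V]
    (T : LieSubalgebra F L) (hT : IsLieAbelian T)
    (gL : ℤ → Submodule F L) (gV : ℤ → Submodule F V)
    (hgL : ∀ x : L, x ∈ ⨆ k, gL k) (hgV : ∀ v : V, v ∈ ⨆ k, gV k)
    (hT0 : T.toSubmodule ≤ gL 0)
    (hLdec : ∀ x : L, x ∈ Submodule.span F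
      {y : L | ∃ β : T → F, ∀ h : T, ⁅(h : L), y⁆ = β h • y})
    (hVdec : ∀ v : V, v ∈ Submodule.span F
      {w : V | ∃ β : T → F, ∀ h : T, ⁅(h : L), w⁆ = β h • w}) :
    (∀ (φ : L →ₗ[F] V), (∀ x y : L, φ ⁅x, y⁆ = ⁅x, φ y⁆ - ⁅y, φ x⁆) →
      ∀ (α : T →ₗ[F] F), α ≠ 0 →
      (∀ (h : T) (x : L), ⁅(h : L), φ x⁆ - φ ⁅(h : L), x⁆ = α h • φ x) →
      ∃ v : V, ∀ x : L, φ x = ⁅x, v⁆) ∧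
    (∀ (φ : L →ₗ[F] V), (∀ x y : L, φ ⁅x, y⁆ = ⁅x, φ y⁆ - ⁅y, φ x⁆) →
      ∃ (v : V) (ψ : L →ₗ[F] V),
        (∀ x y : L, ψ ⁅x, y⁆ = ⁅x, ψ y⁆ - ⁅y, ψ x⁆) ∧
        (∀ (h : T) (x : L), ⁅(h : L), ψ x⁆ = ψ ⁅(h : L), x⁆) ∧
        (∀ x : L, φ x = ψ x + ⁅x, v⁆)) :=
  weight_derivation_inner_general F L V T hT hLdec hVdec
end
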